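/- For the complete bipartite graph K_{s,t} with s ≥ t ≥ 2, tpc(K_{s,t}) = 3. -/

import Mathlib

/-- Interleave two lists, starting with the first. -/
def List.tpcInterleave {α : Type*} : List α → List α → List α
  | [], ys => ys
  | x :: xs, ys => x :: List.tpcInterleave ys xs
termination_by xs ys => xs.length + ys.length

namespace SimpleGraph

variable {V : Type*} {α : Type*} {G : SimpleGraph V}

/-- The sequence of colors `cE e₀, cV v₁, cE e₁, cV v₂, …, cE e_{m-1}` of the edges and
internal vertices of a walk, in order. -/
def Walk.totalColorSeq (cV : V → α) (cE : Sym2 V → α) {u v : V} (p : G.Walk u v) : List α :=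
  (p.edges.map cE).tpcInterleave (p.support.tail.dropLast.map cV)

/-- A walk is total-proper if in its color sequence, any two entries at distance 1 or 2
are distinct.  This says exactly that adjacent edges get distinct colors, adjacent internal
vertices get distinct colors, and every internal vertex gets a color distinct from those of
its incident edges on the walk. -/
def Walk.IsTotalProper (cV : V → α) (cE : Sym2 V → α) {u v : V} (p : G.Walk u v) : Prop :=
  ∀ i a b, (p.totalColorSeq cV cE)[i]? = some a →
    ((p.totalColorSeq cV cE)[i + 1]? = some b ∨ (p.totalColorSeq cV cE)[i + 2]? = some b) →
    a ≠ b

/-- A total coloring (given by a vertex coloring `cV` and an edge coloring `cE`) makes `G`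
total-proper connected if every two distinct vertices are joined by a total-proper path. -/
def IsTPCColoring (G : SimpleGraph V) (cV : V → α) (cE : Sym2 V → α) : Prop :=
  ∀ u v : V, u ≠ v → ∃ p : G.Walk u v, p.IsPath ∧ p.IsTotalProper cV cE

/-- The total-proper connection number: the minimum number of colors in a total coloring
making `G` total-proper connected. -/
noncomputable def tpc (G : SimpleGraph V) : ℕ :=
  sInf {k | ∃ (cV : V → Fin k) (cE : Sym2 V → Fin k), G.IsTPCColoring cV cE}

end SimpleGraph

/-!
Lower bound: two vertices on the same side are not adjacent, so a path between them has length
at least `2`, and the first three entries `cE e₀, cV v₁, cE e₁` of its colour sequence are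
pairwise distinct.

Upper bound: write `aᵢ`, `bⱼ` for the vertices of `K_{s,t}`. Colour `a₀` with `1`, `b₀` with `2`
and every other vertex with `0`; colour the edges `aᵢbᵢ₊₁` with `2`, the other edges at `a₀` with
`0` and all remaining edges with `1`. Two vertices `bⱼ, bⱼ'` are joined through `aᵢ` with
`i + 1 = max j j'`, which exists because `t ≤ s`. Two vertices `aᵢ, aᵢ'` are joined through `b₀`
if one of them is `a₀`, and otherwise along `aᵢ b₀ a₀ b₁ aᵢ'`, coloured `1 2 0 1 2 0 1`.
-/

namespace List

variable {α : Type*}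

theorem length_tpcInterleave : ∀ xs ys : List α,
    (tpcInterleave xs ys).length = xs.length + ys.length
  | [], ys => by simp [tpcInterleave]
  | x :: xs, ys => by
      simp only [tpcInterleave, length_cons, length_tpcInterleave ys xs]; omega
termination_by xs ys => xs.length + ys.length

def DistinctWithinTwo (l : List α) : Prop :=
  ∀ i a b, l[i]? = some a → (l[i + 1]? = some b ∨ l[i + 2]? = some b) → a ≠ b

@[simp] theorem distinctWithinTwo_nil : ([] : List α).DistinctWithinTwo := by
  intro i a b h; simp at h

@[simp] theorem distinctWithinTwo_cons {a : α} {l : List α} :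
    (a :: l).DistinctWithinTwo ↔ a ∉ l.take 2 ∧ l.DistinctWithinTwo := by
  have hhead : (∀ b, (l[0]? = some b ∨ l[1]? = some b) → a ≠ b) ↔ a ∉ l.take 2 := by
    rcases l with _ | ⟨x, _ | ⟨y, l⟩⟩ <;> simp [or_imp, forall_and]
  rw [← hhead]
  constructor
  · intro h
    exact ⟨fun b => h 0 a b rfl, fun i => h (i + 1)⟩
  · rintro ⟨h₀, h⟩ (_ | i) <;> simp only [getElem?_cons_zero, getElem?_cons_succ, Option.some.injEq]
    · rintro _ _ rfl; exact h₀ _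
    · exact h i

theorem DistinctWithinTwo.three_le_card [Fintype α] {l : List α}
    (hl : l.DistinctWithinTwo) (h3 : 3 ≤ l.length) : 3 ≤ Fintype.card α := by
  classical
  obtain ⟨a, b, c, l, rfl⟩ : ∃ a b c l', l = a :: b :: c :: l' := by
    rcases l with _ | ⟨a, _ | ⟨b, _ | ⟨c, l⟩⟩⟩ <;> simp at h3 ⊢
  simp only [distinctWithinTwo_cons, take_succ_cons, take_zero, mem_cons, not_mem_nil] at hl
  have : ({a, b, c} : Finset α).card = 3 := by
    rw [Finset.card_insert_of_notMem (by simp; tauto), Finset.card_pair (by tauto)]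
  exact this ▸ Finset.card_le_univ _

end List

namespace SimpleGraph

variable {V α : Type*} {G : SimpleGraph V} {cV : V → α} {cE : Sym2 V → α} {u v w : V}

theorem Walk.isTotalProper_iff (p : G.Walk u v) :
    p.IsTotalProper cV cE ↔ (p.totalColorSeq cV cE).DistinctWithinTwo :=
  Iff.rfl

theorem Walk.length_totalColorSeq (p : G.Walk u v) :
    (p.totalColorSeq cV cE).length = 2 * p.length - 1 := by
  simp only [totalColorSeq, List.length_tpcInterleave, List.length_map, length_edges,
    List.length_dropLast, List.length_tail, length_support]
  omega

theorem Walk.IsTotalProper.three_le_card [Fintype α] {p : G.Walk u v}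
    (hp : p.IsTotalProper cV cE) (h2 : 2 ≤ p.length) : 3 ≤ Fintype.card α :=
  List.DistinctWithinTwo.three_le_card hp (by rw [length_totalColorSeq]; omega)

theorem Walk.two_le_length_of_not_adj (p : G.Walk u v) (huv : u ≠ v) (hadj : ¬G.Adj u v) :
    2 ≤ p.length := by
  rcases p with _ | ⟨h, _ | _⟩
  · exact absurd rfl huv
  · exact absurd h hadj
  · simp

theorem IsTPCColoring.three_le_card [Fintype α] (h : G.IsTPCColoring cV cE)
    (huv : u ≠ v) (hadj : ¬G.Adj u v) : 3 ≤ Fintype.card α := by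
  obtain ⟨p, -, hp⟩ := h u v huv
  exact hp.three_le_card (p.two_le_length_of_not_adj huv hadj)

theorem isTPCColoring_of_not_adj
    (h : ∀ u v, u ≠ v → ¬G.Adj u v → ∃ p : G.Walk u v, p.IsPath ∧ p.IsTotalProper cV cE) :
    G.IsTPCColoring cV cE := by
  intro u v huv
  by_cases hadj : G.Adj u v
  · refine ⟨.cons hadj .nil, by simpa using huv, ?_⟩
    simp [Walk.isTotalProper_iff, Walk.totalColorSeq, List.tpcInterleave]
  · exact h u v huv hadj

theorem exists_isPath_isTotalProper_of_adj_adj (huw : G.Adj u w) (hwv : G.Adj w v) (huv : u ≠ v)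
    (h₁ : cE s(u, w) ≠ cV w) (h₂ : cV w ≠ cE s(w, v)) (h₃ : cE s(u, w) ≠ cE s(w, v)) :
    ∃ p : G.Walk u v, p.IsPath ∧ p.IsTotalProper cV cE := by
  refine ⟨.cons huw (.cons hwv .nil), ?_, ?_⟩
  · simp [huv, huw.ne, hwv.ne]
  · simp [Walk.isTotalProper_iff, Walk.totalColorSeq, List.tpcInterleave, h₁, h₂, h₃]


namespace completeBipartiteGraph

variable {s t : ℕ}

def tpcVertexColor : Fin s ⊕ Fin t → Fin 3
  | .inl i => if (i : ℕ) = 0 then 1 else 0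
  | .inr j => if (j : ℕ) = 0 then 2 else 0

def tpcEdgeColor (i : Fin s) (j : Fin t) : Fin 3 :=
  if (j : ℕ) = i + 1 then 2 else if (i : ℕ) = 0 then 0 else 1

def tpcEdgeColoring : Sym2 (Fin s ⊕ Fin t) → Fin 3 :=
  Sym2.lift ⟨fun x y => match x, y with
    | .inl i, .inr j => tpcEdgeColor i j
    | .inr j, .inl i => tpcEdgeColor i j
    | _, _ => 0, by rintro (_ | _) (_ | _) <;> rfl⟩

@[simp] theorem tpcVertexColor_inl (i : Fin s) :
    tpcVertexColor (.inl i : Fin s ⊕ Fin t) = if (i : ℕ) = 0 then 1 else 0 := rfl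

@[simp] theorem tpcVertexColor_inr (j : Fin t) :
    tpcVertexColor (.inr j : Fin s ⊕ Fin t) = if (j : ℕ) = 0 then 2 else 0 := rfl

@[simp] theorem tpcEdgeColoring_inl_inr (i : Fin s) (j : Fin t) :
    tpcEdgeColoring s(.inl i, .inr j) = tpcEdgeColor i j := rfl

@[simp] theorem tpcEdgeColoring_inr_inl (i : Fin s) (j : Fin t) :
    tpcEdgeColoring s(.inr j, .inl i) = tpcEdgeColor i j := rfl

theorem exists_path_inl_inl (ht : 2 ≤ t) {i i' : Fin s} (hii' : i ≠ i') :
    ∃ p : (completeBipartiteGraph (Fin s) (Fin t)).Walk (.inl i) (.inl i'),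
      p.IsPath ∧ p.IsTotalProper tpcVertexColor tpcEdgeColoring := by
  have hval : (i : ℕ) ≠ i' := Fin.val_ne_of_ne hii'
  let a₀ : Fin s := ⟨0, i.pos⟩
  let b₀ : Fin t := ⟨0, by omega⟩
  let b₁ : Fin t := ⟨1, by omega⟩
  by_cases h0 : (i : ℕ) = 0 ∨ (i' : ℕ) = 0
  · refine exists_isPath_isTotalProper_of_adj_adj (w := .inr b₀) (by simp) (by simp) (by simpa)
      ?_ ?_ ?_ <;> simp [tpcEdgeColor, b₀] <;> split_ifs <;> first | decide | omega
  · push Not at h0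
    refine ⟨.cons (v := .inr b₀) (by simp) <| .cons (v := .inl a₀) (by simp) <|
      .cons (v := .inr b₁) (by simp) <| .cons (by simp) .nil, ?_, ?_⟩
    · simp [a₀, b₀, b₁, Fin.ext_iff, hval, h0, eq_comm]
    · simp [Walk.isTotalProper_iff, Walk.totalColorSeq, List.tpcInterleave, tpcEdgeColor,
        a₀, b₀, b₁, h0]

theorem exists_path_inr_inr (hts : t ≤ s) {j j' : Fin t} (hjj' : j ≠ j') :
    ∃ p : (completeBipartiteGraph (Fin s) (Fin t)).Walk (.inr j) (.inr j'),
      p.IsPath ∧ p.IsTotalProper tpcVertexColor tpcEdgeColoring := by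
  have hval : (j : ℕ) ≠ j' := Fin.val_ne_of_ne hjj'
  obtain ⟨i, hi⟩ : ∃ i : Fin s, (i : ℕ) + 1 = max (j : ℕ) j' :=
    ⟨⟨max (j : ℕ) j' - 1, by omega⟩, by simp only; omega⟩
  refine exists_isPath_isTotalProper_of_adj_adj (w := .inl i) (by simp) (by simp) (by simpa)
    ?_ ?_ ?_ <;> simp [tpcEdgeColor] <;> split_ifs <;> first | decide | omega

theorem isTPCColoring_tpcVertexColor_tpcEdgeColoring (hts : t ≤ s) (ht : 2 ≤ t) :
    (completeBipartiteGraph (Fin s) (Fin t)).IsTPCColoring tpcVertexColor tpcEdgeColoring := by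
  refine isTPCColoring_of_not_adj ?_
  rintro (i | j) (i' | j') hne hadj
  · exact exists_path_inl_inl ht (by simpa using hne)
  · simp at hadj
  · simp at hadj
  · exact exists_path_inr_inr hts (by simpa using hne)

end completeBipartiteGraph

end SimpleGraph

open SimpleGraph in
theorem tpc_completeBipartite (s t : ℕ) (hts : t ≤ s) (ht : 2 ≤ t) :
    (completeBipartiteGraph (Fin s) (Fin t)).tpc = 3 := by
  refine IsLeast.csInf_eq ⟨⟨_, _, completeBipartiteGraph.isTPCColoring_tpcVertexColor_tpcEdgeColoring hts ht⟩, ?_⟩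
  rintro k ⟨cV, cE, hc⟩
  simpa using hc.three_le_card (u := .inr ⟨0, by omega⟩) (v := .inr ⟨1, by omega⟩)
    (by simp [Fin.ext_iff]) (by simp)
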